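/- arXiv:math/0410442 — 3 statements merged into one kernel-verified Lean document; each statement's English description precedes it below -/
import Mathlib

section
/- Let σ_1, σ_2 be rational polyhedral cones in Q^n with span(σ_1) ∩ span(σ_2) = Q·a for some a ∈ σ_1 ∩ σ_2, and let σ = pos(σ_1 ∪ σ_2) be their direct sum. Then σ_1 and σ_2 are both strongly convex if and only if σ is strongly convex. -/
open scoped BigOperators

/-- The cone of nonnegative rational combinations of elements of `S`. -/
def posSpan {n : ℕ} (S : Set (Fin n → ℚ)) : Set (Fin n → ℚ) :=
  {x | ∃ (k : ℕ) (c : Fin k → ℚ) (b : Fin k → (Fin n → ℚ)),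
    (∀ i, 0 ≤ c i) ∧ (∀ i, b i ∈ S) ∧ x = ∑ i, c i • b i}

/-- A rational polyhedral cone: `posSpan` of a finite set. -/
def IsPolyCone {n : ℕ} (σ : Set (Fin n → ℚ)) : Prop :=
  ∃ B : Finset (Fin n → ℚ), σ = posSpan (B : Set (Fin n → ℚ))

/-- A cone is strongly convex if `σ ∩ (-σ) = {0}`. -/
def StronglyConvex {n : ℕ} (σ : Set (Fin n → ℚ)) : Prop :=
  ∀ x, x ∈ σ → -x ∈ σ → x = 0

/-- dot product in `ℚ^n`. -/
def dotQ {n : ℕ} (c x : Fin n → ℚ) : ℚ := ∑ i, c i * x i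

/-- `R` is an extreme ray of `σ`: a one-dimensional face cut out by a
supporting vector `c`. -/
def IsExtremeRay {n : ℕ} (σ R : Set (Fin n → ℚ)) : Prop :=
  ∃ c : Fin n → ℚ, (∀ x ∈ σ, 0 ≤ dotQ c x) ∧
    R = {x ∈ σ | dotQ c x = 0} ∧
    Module.finrank ℚ (Submodule.span ℚ R) = 1

/-- The dimension of a cone: dimension of its rational linear span. -/
noncomputable def coneDim {n : ℕ} (σ : Set (Fin n → ℚ)) : ℕ :=
  Module.finrank ℚ (Submodule.span ℚ σ)

/-- `σ` is the direct sum of `σ₁` and `σ₂` along `a`. -/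
def IsDirectSumAlong {n : ℕ} (σ₁ σ₂ σ : Set (Fin n → ℚ)) (a : Fin n → ℚ) : Prop :=
  a ∈ σ₁ ∩ σ₂ ∧
  Submodule.span ℚ σ₁ ⊓ Submodule.span ℚ σ₂ = Submodule.span ℚ {a} ∧
  σ = posSpan (σ₁ ∪ σ₂)

/-- `σ` is a direct sum of `σ₁` and `σ₂`. -/
def IsDirectSum {n : ℕ} (σ₁ σ₂ σ : Set (Fin n → ℚ)) : Prop :=
  ∃ a, IsDirectSumAlong σ₁ σ₂ σ a

/-- `a` lies on an extreme ray of `σ`. -/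
def OnExtremeRay {n : ℕ} (σ : Set (Fin n → ℚ)) (a : Fin n → ℚ) : Prop :=
  ∃ R, IsExtremeRay σ R ∧ a ∈ R

/-- The ray `ℚ⁺ r`. -/
def rayOf {n : ℕ} (r : Fin n → ℚ) : Set (Fin n → ℚ) :=
  {x | ∃ q : ℚ, 0 ≤ q ∧ x = q • r}

lemma posSpan_zero {n : ℕ} (S : Set (Fin n → ℚ)) : (0 : Fin n → ℚ) ∈ posSpan S :=
  ⟨0, fun i => i.elim0, fun i => i.elim0, fun i => i.elim0, fun i => i.elim0, by simp⟩

lemma subset_posSpan {n : ℕ} (S : Set (Fin n → ℚ)) : S ⊆ posSpan S := fun s hs =>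
  ⟨1, fun _ => 1, fun _ => s, fun _ => zero_le_one, fun _ => hs, by simp⟩

lemma posSpan_smul {n : ℕ} {S : Set (Fin n → ℚ)} {q : ℚ} {x : Fin n → ℚ}
    (hq : 0 ≤ q) (hx : x ∈ posSpan S) : q • x ∈ posSpan S := by
  obtain ⟨k, c, b, hc, hb, rfl⟩ := hx
  exact ⟨k, fun i => q * c i, b, fun i => mul_nonneg hq (hc i), hb, by
    rw [Finset.smul_sum]; simp [smul_smul]⟩

lemma posSpan_add {n : ℕ} {S : Set (Fin n → ℚ)} {x y : Fin n → ℚ}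
    (hx : x ∈ posSpan S) (hy : y ∈ posSpan S) : x + y ∈ posSpan S := by
  obtain ⟨k, c, b, hc, hb, rfl⟩ := hx
  obtain ⟨m, d, e, hd, he, rfl⟩ := hy
  refine ⟨k + m, Fin.append c d, Fin.append b e, ?_, ?_, ?_⟩
  · intro i
    refine Fin.addCases (fun j => ?_) (fun j => ?_) i <;> simp [hc, hd]
  · intro i
    refine Fin.addCases (fun j => ?_) (fun j => ?_) i <;> simp [hb, he]
  · rw [Fin.sum_univ_add]
    simp

lemma posSpan_sum {n : ℕ} {S : Set (Fin n → ℚ)} {k : ℕ} (f : Fin k → (Fin n → ℚ))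
    (hf : ∀ i, f i ∈ posSpan S) : ∑ i, f i ∈ posSpan S := by
  induction k with
  | zero => simpa using posSpan_zero S
  | succ m ih =>
      rw [Fin.sum_univ_succ]
      exact posSpan_add (hf 0) (ih _ (fun i => hf i.succ))

lemma posSpan_posSpan {n : ℕ} {S : Set (Fin n → ℚ)} {x : Fin n → ℚ}
    (hx : x ∈ posSpan (posSpan S)) : x ∈ posSpan S := by
  obtain ⟨k, c, b, hc, hb, rfl⟩ := hx
  exact posSpan_sum _ (fun i => posSpan_smul (hc i) (hb i))

lemma decomp {n : ℕ} {σ₁ σ₂ : Set (Fin n → ℚ)}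
    (h₁ : ∃ B : Finset (Fin n → ℚ), σ₁ = posSpan (B : Set (Fin n → ℚ)))
    (h₂ : ∃ B : Finset (Fin n → ℚ), σ₂ = posSpan (B : Set (Fin n → ℚ)))
    {x : Fin n → ℚ} (hx : x ∈ posSpan (σ₁ ∪ σ₂)) :
    ∃ x₁ ∈ σ₁, ∃ x₂ ∈ σ₂, x = x₁ + x₂ := by
  classical
  obtain ⟨k, c, b, hc, hb, rfl⟩ := hx
  obtain ⟨B₁, rfl⟩ := h₁
  obtain ⟨B₂, rfl⟩ := h₂
  refine ⟨∑ i, if b i ∈ posSpan (B₁ : Set (Fin n → ℚ)) then c i • b i else 0, ?_,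
    ∑ i, if b i ∈ posSpan (B₁ : Set (Fin n → ℚ)) then 0 else c i • b i, ?_, ?_⟩
  · refine posSpan_sum _ (fun i => ?_)
    split_ifs with h
    · exact posSpan_posSpan (posSpan_smul (hc i) (subset_posSpan _ h))
    · exact posSpan_zero _
  · refine posSpan_sum _ (fun i => ?_)
    split_ifs with h
    · exact posSpan_zero _
    · rcases hb i with h' | h'
      · exact absurd h' h
      · exact posSpan_posSpan (posSpan_smul (hc i) (subset_posSpan _ h'))
  · rw [← Finset.sum_add_distrib]
    refine Finset.sum_congr rfl (fun i _ => ?_)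
    split_ifs <;> simp

/--  and  are strongly convex iff their direct sum is. -/
theorem stronglyConvex_iff_directSum {n : ℕ} (σ₁ σ₂ σ : Set (Fin n → ℚ))
    (h₁ : IsPolyCone σ₁) (h₂ : IsPolyCone σ₂) (a : Fin n → ℚ)
    (hds : IsDirectSumAlong σ₁ σ₂ σ a) :
    (StronglyConvex σ₁ ∧ StronglyConvex σ₂) ↔ StronglyConvex σ := by
  obtain ⟨⟨ha1, ha2⟩, hspan, hσ⟩ := hds
  have sub1 : σ₁ ⊆ σ := fun x hx => hσ ▸ subset_posSpan _ (Set.mem_union_left _ hx)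
  have sub2 : σ₂ ⊆ σ := fun x hx => hσ ▸ subset_posSpan _ (Set.mem_union_right _ hx)
  have add1 : ∀ x ∈ σ₁, ∀ y ∈ σ₁, x + y ∈ σ₁ := by
    obtain ⟨B, rfl⟩ := h₁; exact fun x hx y hy => posSpan_add hx hy
  have add2 : ∀ x ∈ σ₂, ∀ y ∈ σ₂, x + y ∈ σ₂ := by
    obtain ⟨B, rfl⟩ := h₂; exact fun x hx y hy => posSpan_add hx hy
  have smul1 : ∀ q : ℚ, 0 ≤ q → ∀ x ∈ σ₁, q • x ∈ σ₁ := by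
    obtain ⟨B, rfl⟩ := h₁; exact fun q hq x hx => posSpan_smul hq hx
  have smul2 : ∀ q : ℚ, 0 ≤ q → ∀ x ∈ σ₂, q • x ∈ σ₂ := by
    obtain ⟨B, rfl⟩ := h₂; exact fun q hq x hx => posSpan_smul hq hx
  constructor
  · rintro ⟨hs1, hs2⟩ x hx hnx
    rw [hσ] at hx hnx
    obtain ⟨x₁, hx₁, x₂, hx₂, rfl⟩ := decomp h₁ h₂ hx
    obtain ⟨y₁, hy₁, y₂, hy₂, hy⟩ := decomp h₁ h₂ hnx
    have mem1 : x₁ + y₁ ∈ Submodule.span ℚ σ₁ ⊓ Submodule.span ℚ σ₂ := by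
      refine ⟨add_mem (Submodule.subset_span hx₁) (Submodule.subset_span hy₁), ?_⟩
      have : x₁ + y₁ = -(x₂ + y₂) := by linear_combination -hy
      rw [this]
      exact neg_mem (add_mem (Submodule.subset_span hx₂) (Submodule.subset_span hy₂))
    rw [hspan] at mem1
    obtain ⟨q, hq⟩ := Submodule.mem_span_singleton.mp mem1
    have key2 : x₂ + y₂ = -(q • a) := by rw [hq]; linear_combination -hy
    have hzero : x₁ + y₁ = 0 ∧ x₂ + y₂ = 0 := by
      rcases le_or_gt 0 q with hq0 | hq0
      · have h2a : x₂ + y₂ = 0 := by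
          refine hs2 _ (add2 _ hx₂ _ hy₂) ?_
          rw [key2, neg_neg]
          exact smul2 q hq0 a ha2
        refine ⟨?_, h2a⟩
        rw [← hq, ← neg_eq_zero, ← key2, h2a]
      · have h1a : x₁ + y₁ = 0 := by
          refine hs1 _ (add1 _ hx₁ _ hy₁) ?_
          have : -(x₁ + y₁) = (-q) • a := by rw [← hq]; module
          rw [this]
          exact smul1 (-q) (by linarith) a ha1
        refine ⟨h1a, ?_⟩
        rw [key2, hq, h1a, neg_zero]
    have e1 : -x₁ = y₁ := by linear_combination -hzero.1
    have hx10 : x₁ = 0 := hs1 x₁ hx₁ (e1 ▸ hy₁)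
    have e2 : -x₂ = y₂ := by linear_combination -hzero.2
    have hx20 : x₂ = 0 := hs2 x₂ hx₂ (e2 ▸ hy₂)
    rw [hx10, hx20, add_zero]
  · intro hs
    exact ⟨fun x hx hnx => hs x (sub1 hx) (sub1 hnx),
           fun x hx hnx => hs x (sub2 hx) (sub2 hnx)⟩
end

section
/- Let σ = σ_1 ⊕_a σ_2 be a direct sum of internal type of strongly convex rational polyhedral cones, where σ_1 has k_1 extreme rays and σ_2 has k_2 extreme rays. Then σ has exactly k_1 + k_2 extreme rays, namely the union of the extreme rays of σ_1 and σ_2. -/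
open scoped BigOperators

/-!
The sum is `σ = σ₁ + σ₂`, and a functional `c ≥ 0` on `σ` cuts out the face `F₁ + F₂`, where `Fᵢ`
is the face of `σᵢ` cut out by `c`. If an extreme ray of `σ` met both summands in nonzero points,
these would be proportional, hence in `span σ₁ ∩ span σ₂ = ℚ a`, which puts `a` on an extreme ray
of `σ₁`; so the ray is `F₁` or `F₂`. Conversely, if `c₁` cuts out an extreme ray of `σ₁` then
`c₁ a > 0`, because `a` is not on the ray. Gordan's theorem gives a functional `w` that is
positive on `σ₂ \ {0}`, since `σ₂` is strongly convex and polyhedral, and gluing `c₁` on `span σ₁`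
with the multiple of `w` that agrees with `c₁` at `a` gives a functional cutting out the same ray
in `σ`. The same proportionality argument shows that no ray is extreme in both summands.
-/

open Module
open scoped Pointwise

section OrderedField

variable {K V : Type*} [Field K] [LinearOrder K] [IsStrictOrderedRing K]

theorem exists_forall_lt_mul {ι : Type*} [Finite ι] (x y : ι → K) (hy : ∀ i, 0 < y i) :
    ∃ t, ∀ i, x i < t * y i := by
  obtain ⟨M, hM⟩ := Finite.exists_le fun i => x i / y i
  refine ⟨M + 1, fun i => ?_⟩
  rw [← div_lt_iff₀ (hy i)]
  linarith [hM i]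

variable [AddCommGroup V] [Module K V]

theorem exists_dual_forall_pos_and_ne_zero {ι : Type*} [Finite ι] {a : ι → V} {v : V}
    (hv : v ≠ 0) {w : Dual K V} (hw : ∀ i, 0 < w (a i)) :
    ∃ w' : Dual K V, (∀ i, 0 < w' (a i)) ∧ w' v ≠ 0 := by
  by_cases hwv : w v = 0
  · obtain ⟨φ, hφ⟩ := Projective.exists_dual_eq_one K hv
    obtain ⟨t, ht⟩ := exists_forall_lt_mul (fun i => φ (a i)) _ hw
    exact ⟨t • w - φ, fun i => by simpa using ht i, by simp [hwv, hφ]⟩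
  · exact ⟨w, hw, hwv⟩

theorem exists_dual_forall_pos_and_pos {ι : Type*} [Finite ι] {a : ι → V} {v : V}
    {w u : Dual K V} (hwv : w v < 0)
    (hu : ∀ i, 0 < u (-w v • a i + w (a i) • v)) :
    ∃ φ : Dual K V, (∀ i, 0 < φ (a i)) ∧ 0 < φ v := by
  obtain ⟨t, ht⟩ := exists_forall_lt_mul (fun i => w (a i)) _ hu
  have hwv0 : w v ≠ 0 := hwv.ne
  -- the multiple of `w` is chosen so that `φ v = 1`
  refine ⟨t • u + ((1 - t * u v) / w v) • w, fun i => ?_, by simp [div_mul_cancel₀ _ hwv0]⟩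
  have key : -w v * (t • u + ((1 - t * u v) / w v) • w) (a i) =
      t * u (-w v • a i + w (a i) • v) - w (a i) := by
    simp only [LinearMap.add_apply, LinearMap.smul_apply, smul_eq_mul, map_add, map_smul]
    field_simp
    ring
  have := ht i
  exact pos_of_mul_pos_right (by linarith) (neg_nonneg.2 hwv.le)

theorem exists_dual_forall_pos {m : ℕ} (a : Fin m → V)
    (ha : ∀ l : Fin m → K, (∀ i, 0 ≤ l i) → ∑ i, l i • a i = 0 → l = 0) :
    ∃ w : Dual K V, ∀ i, 0 < w (a i) := by
  induction m with
  | zero => exact ⟨0, fun i => i.elim0⟩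
  | succ m ih =>
    set v := a (Fin.last m)
    have hrel : ∀ (l : Fin m → K) (t : K), (∀ i, 0 ≤ l i) → 0 ≤ t →
        ∑ i, l i • a i.castSucc + t • v = 0 → l = 0 ∧ t = 0 := by
      intro l t hl ht hsum
      have h := ha (Fin.snoc l t) (Fin.lastCases (by simpa) (by simpa))
        (by simpa [Fin.sum_univ_castSucc])
      exact ⟨funext fun i => by simpa using congr_fun h i.castSucc,
        by simpa using congr_fun h (Fin.last m)⟩
    have hv : v ≠ 0 := fun h =>
      one_ne_zero (hrel 0 1 (fun _ => le_rfl) zero_le_one (by simp [h])).2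
    obtain ⟨w₀, hw₀⟩ := ih (fun i => a i.castSucc) fun l hl hsum =>
      (hrel l 0 hl le_rfl (by simpa using hsum)).1
    obtain ⟨w, hw, hwv⟩ := exists_dual_forall_pos_and_ne_zero hv hw₀
    simp only [Fin.forall_fin_succ']
    rcases hwv.lt_or_gt with hwv | hwv
    · -- the vectors `-w v • a i + w (a i) • v` lie in `ker w`, and a nonnegative relation among
      -- them is one among the `a i` and `v`
      obtain ⟨u, hu⟩ := ih (fun i => -w v • a i.castSucc + w (a i.castSucc) • v) fun l hl hsum => by
        have h := hrel (-w v • l) (∑ i, l i * w (a i.castSucc))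
          (fun i => mul_nonneg (neg_nonneg.2 hwv.le) (hl i))
          (Finset.sum_nonneg fun i _ => mul_nonneg (hl i) (hw i).le) (by
            rw [← hsum]
            simp [smul_add, Finset.sum_add_distrib, smul_smul, Finset.sum_smul, mul_comm])
        exact (smul_eq_zero.1 h.1).resolve_left (neg_ne_zero.2 hwv.ne)
      exact exists_dual_forall_pos_and_pos hwv hu
    · exact ⟨w, hw, hwv⟩

end OrderedField

section DivisionRing

variable {K V : Type*} [DivisionRing K] [AddCommGroup V] [Module K V]

theorem exists_mem_ne_zero_of_finrank_span_eq_one {R : Set V}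
    (h : Module.finrank K (Submodule.span K R) = 1) : ∃ r ∈ R, r ≠ 0 := by
  by_contra! hR
  rw [(Submodule.span_eq_bot).2 hR, finrank_bot] at h
  exact zero_ne_one h

theorem finrank_span_eq_one_of_subset {S R : Set V} (hSR : S ⊆ R)
    (hR : Module.finrank K (Submodule.span K R) = 1) {x : V} (hx : x ∈ S) (hx0 : x ≠ 0) :
    Module.finrank K (Submodule.span K S) = 1 := by
  have hRx := eq_span_singleton_of_mem_of_finrank_eq_one hR (Submodule.subset_span (hSR hx)) hx0
  have hSx : Submodule.span K S = K ∙ x := le_antisymm (hRx ▸ Submodule.span_mono hSR)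
    ((Submodule.span_singleton_le_iff_mem _ _).2 (Submodule.subset_span hx))
  rw [hSx, finrank_span_singleton hx0]

end DivisionRing

section Field

variable {K V : Type*} [Field K] [AddCommGroup V] [Module K V]

theorem Module.Dual.exists_eqOn_of_eqOn_inf {S T : Submodule K V} {f g : Dual K V}
    (h : ∀ x ∈ S ⊓ T, f x = g x) :
    ∃ φ : Dual K V, (∀ x ∈ S, φ x = f x) ∧ ∀ x ∈ T, φ x = g x := by
  let p := LinearPMap.sup ⟨S, f.domRestrict S⟩ ⟨T, g.domRestrict T⟩
    fun x y hxy => h x ⟨x.2, hxy ▸ y.2⟩ |>.trans (congrArg g hxy)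
  obtain ⟨φ, hφ⟩ := LinearMap.exists_extend p.toFun
  have hp : ∀ x (hx : x ∈ p.domain), φ x = p ⟨x, hx⟩ := fun x hx => LinearMap.congr_fun hφ ⟨x, hx⟩
  refine ⟨φ, fun x hx => ?_, fun x hx => ?_⟩
  · rw [hp x (le_sup_left (b := T) hx)]
    exact ((LinearPMap.left_le_sup _ _ _).2 (x := ⟨x, hx⟩) rfl).symm
  · rw [hp x (le_sup_right (a := S) hx)]
    exact ((LinearPMap.right_le_sup _ _ _).2 (x := ⟨x, hx⟩) rfl).symm

end Field

namespace PointedCone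

variable {K V : Type*} [Field K] [LinearOrder K] [IsStrictOrderedRing K]
  [AddCommGroup V] [Module K V]

theorem eq_zero_of_sum_eq_zero {C : PointedCone K V} (hC : (C : ConvexCone K V).Salient)
    {ι : Type*} {s : Finset ι} {f : ι → V} (hf : ∀ i ∈ s, f i ∈ C) (hsum : ∑ i ∈ s, f i = 0) :
    ∀ i ∈ s, f i = 0 := by
  classical
  intro j hj
  by_contra hj0
  have hneg : -f j = ∑ i ∈ s.erase j, f i := by
    rw [← Finset.add_sum_erase s f hj] at hsum
    exact neg_eq_of_add_eq_zero_right hsum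
  exact hC (f j) (hf j hj) hj0 (hneg ▸ C.sum_mem fun i hi => hf i (Finset.mem_of_mem_erase hi))

theorem pos_of_mem_hull {s : Set V} {w : Dual K V} (hw : ∀ b ∈ s, b ≠ 0 → 0 < w b) {x : V}
    (hx : x ∈ hull K s) (hx0 : x ≠ 0) : 0 < w x := by
  suffices h : 0 ≤ w x ∧ (w x = 0 → x = 0) from h.1.lt_of_ne fun hwx => hx0 (h.2 hwx.symm)
  clear hx0
  induction hx using Submodule.span_induction with
  | mem b hb =>
    rcases eq_or_ne b 0 with rfl | hb0
    · simp
    · exact ⟨(hw b hb hb0).le, fun h => absurd h (hw b hb hb0).ne'⟩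
  | zero => simp
  | add x y _ _ hx hy =>
    refine ⟨by simpa using add_nonneg hx.1 hy.1, fun h => ?_⟩
    rw [map_add] at h
    rw [hx.2 (by linarith [hx.1, hy.1]), hy.2 (by linarith [hx.1, hy.1]), add_zero]
  | smul t x _ hx =>
    rw [show t • x = (t : K) • x from rfl, map_smul, smul_eq_mul, smul_eq_zero]
    exact ⟨mul_nonneg t.2 hx.1, fun h => (mul_eq_zero.1 h).imp_right hx.2⟩

theorem exists_dual_pos_of_salient {B : Finset V}
    (hB : (hull K (B : Set V) : ConvexCone K V).Salient) :
    ∃ w : Dual K V, ∀ x ∈ hull K (B : Set V), x ≠ 0 → 0 < w x := by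
  classical
  set a : Fin _ → V := fun i => ((B.erase 0).equivFin.symm i : V)
  have haB : ∀ i, a i ∈ B := fun i => Finset.mem_of_mem_erase ((B.erase 0).equivFin.symm i).2
  have ha0 : ∀ i, a i ≠ 0 := fun i => Finset.ne_of_mem_erase ((B.erase 0).equivFin.symm i).2
  obtain ⟨w, hw⟩ := exists_dual_forall_pos a fun l hl hsum => funext fun i =>
    (smul_eq_zero.1 (eq_zero_of_sum_eq_zero hB
      (fun i _ => (hull K (B : Set V)).smul_mem (hl i) (subset_hull (haB i)))
      hsum i (Finset.mem_univ i))).resolve_right (ha0 i)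
  refine ⟨w, fun x => pos_of_mem_hull fun b hb hb0 => ?_⟩
  simpa [a] using hw ((B.erase 0).equivFin ⟨b, Finset.mem_erase.2 ⟨hb0, hb⟩⟩)

end PointedCone

section RationalCones

variable {n : ℕ}

theorem dotQ_eq_dotProductEquiv (c x : Fin n → ℚ) : dotQ c x = dotProductEquiv ℚ (Fin n) c x := rfl

theorem dotQ_add_right (c x y : Fin n → ℚ) : dotQ c (x + y) = dotQ c x + dotQ c y :=
  dotProduct_add c x y

theorem dotQ_smul_right (c : Fin n → ℚ) (t : ℚ) (x : Fin n → ℚ) : dotQ c (t • x) = t * dotQ c x :=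
  dotProduct_smul t c x

theorem dotQ_smul_left (t : ℚ) (c x : Fin n → ℚ) : dotQ (t • c) x = t * dotQ c x :=
  smul_dotProduct t c x

theorem dotQ_zero_right (c : Fin n → ℚ) : dotQ c 0 = 0 := dotProduct_zero c

theorem posSpan_eq_hull (S : Set (Fin n → ℚ)) : posSpan S = PointedCone.hull ℚ S := by
  ext x
  refine ⟨?_, fun hx => ?_⟩
  · rintro ⟨k, c, b, hc, hb, rfl⟩
    exact Submodule.sum_mem _ fun i _ =>
      (PointedCone.hull ℚ S).smul_mem (hc i) (PointedCone.subset_hull (hb i))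
  induction hx using Submodule.span_induction with
  | mem x hx => exact ⟨1, fun _ => 1, fun _ => x, fun _ => zero_le_one, fun _ => hx, by simp⟩
  | zero => exact ⟨0, Fin.elim0, Fin.elim0, fun i => i.elim0, fun i => i.elim0, by simp⟩
  | add x y _ _ hx hy =>
    obtain ⟨k, c, b, hc, hb, rfl⟩ := hx
    obtain ⟨l, d, e, hd, he, rfl⟩ := hy
    refine ⟨k + l, Fin.append c d, Fin.append b e, Fin.addCases (by simpa) (by simpa),
      Fin.addCases (by simpa) (by simpa), by simp [Fin.sum_univ_add]⟩
  | smul t x _ hx =>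
    obtain ⟨k, c, b, hc, hb, rfl⟩ := hx
    refine ⟨k, fun i => t * c i, b, fun i => mul_nonneg t.2 (hc i), hb, ?_⟩
    change (t : ℚ) • ∑ i, c i • b i = _
    simp [Finset.smul_sum, smul_smul]

theorem IsPolyCone.zero_mem {σ : Set (Fin n → ℚ)} (h : IsPolyCone σ) : (0 : Fin n → ℚ) ∈ σ := by
  obtain ⟨B, rfl⟩ := h
  rw [posSpan_eq_hull]
  exact Submodule.zero_mem _

theorem IsPolyCone.posSpan_union {σ₁ σ₂ : Set (Fin n → ℚ)} (h₁ : IsPolyCone σ₁)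
    (h₂ : IsPolyCone σ₂) : posSpan (σ₁ ∪ σ₂) = σ₁ + σ₂ := by
  obtain ⟨B₁, rfl⟩ := h₁
  obtain ⟨B₂, rfl⟩ := h₂
  simp only [posSpan_eq_hull, Submodule.span_union, Submodule.span_eq, Submodule.coe_sup]

theorem IsPolyCone.exists_dotQ_pos {σ : Set (Fin n → ℚ)} (h : IsPolyCone σ)
    (hs : StronglyConvex σ) : ∃ w, ∀ x ∈ σ, x ≠ 0 → 0 < dotQ w x := by
  obtain ⟨B, rfl⟩ := h
  rw [posSpan_eq_hull] at hs ⊢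
  obtain ⟨w, hw⟩ := PointedCone.exists_dual_pos_of_salient fun x hx hx0 hnx => hx0 (hs x hx hnx)
  refine ⟨(dotProductEquiv ℚ (Fin n)).symm w, fun x hx hx0 => ?_⟩
  simpa [dotQ_eq_dotProductEquiv] using hw x hx hx0

theorem exists_dotQ_eqOn {S T : Submodule ℚ (Fin n → ℚ)} {c₁ c₂ : Fin n → ℚ}
    (h : ∀ x ∈ S ⊓ T, dotQ c₁ x = dotQ c₂ x) :
    ∃ c, (∀ x ∈ S, dotQ c x = dotQ c₁ x) ∧ ∀ x ∈ T, dotQ c x = dotQ c₂ x := by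
  obtain ⟨φ, hS, hT⟩ := Module.Dual.exists_eqOn_of_eqOn_inf (f := dotProductEquiv ℚ (Fin n) c₁)
    (g := dotProductEquiv ℚ (Fin n) c₂) h
  refine ⟨(dotProductEquiv ℚ (Fin n)).symm φ, fun x hx => ?_, fun x hx => ?_⟩
  · simpa [dotQ_eq_dotProductEquiv] using hS x hx
  · simpa [dotQ_eq_dotProductEquiv] using hT x hx

end RationalCones

section ExtremeRays

variable {n : ℕ}

def face (σ : Set (Fin n → ℚ)) (c : Fin n → ℚ) : Set (Fin n → ℚ) := {x ∈ σ | dotQ c x = 0}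

theorem face_add {σ₁ σ₂ : Set (Fin n → ℚ)} {c : Fin n → ℚ} (h₁ : ∀ x ∈ σ₁, 0 ≤ dotQ c x)
    (h₂ : ∀ x ∈ σ₂, 0 ≤ dotQ c x) : face (σ₁ + σ₂) c = face σ₁ c + face σ₂ c := by
  ext x
  constructor
  · rintro ⟨⟨x₁, hx₁, x₂, hx₂, rfl⟩, hx⟩
    rw [dotQ_add_right] at hx
    have := h₁ x₁ hx₁
    have := h₂ x₂ hx₂
    exact ⟨x₁, ⟨hx₁, by linarith⟩, x₂, ⟨hx₂, by linarith⟩, rfl⟩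
  · rintro ⟨x₁, ⟨hx₁, h₁⟩, x₂, ⟨hx₂, h₂⟩, rfl⟩
    exact ⟨Set.add_mem_add hx₁ hx₂, by rw [dotQ_add_right, h₁, h₂, add_zero]⟩

theorem face_eq_zero {σ : Set (Fin n → ℚ)} {c : Fin n → ℚ} (h0 : (0 : Fin n → ℚ) ∈ σ)
    (h : ∀ x ∈ face σ c, x = 0) : face σ c = 0 :=
  Set.eq_singleton_iff_unique_mem.2 ⟨⟨h0, dotQ_zero_right c⟩, h⟩

theorem IsExtremeRay.eq_inter_span {σ R : Set (Fin n → ℚ)} (hR : IsExtremeRay σ R)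
    {r : Fin n → ℚ} (hr : r ∈ R) (hr0 : r ≠ 0) : R = σ ∩ (ℚ ∙ r) := by
  obtain ⟨c, -, rfl, hrank⟩ := hR
  have hspan := eq_span_singleton_of_mem_of_finrank_eq_one hrank (Submodule.subset_span hr) hr0
  ext x
  refine ⟨fun hx => ⟨hx.1, hspan ▸ Submodule.subset_span hx⟩, ?_⟩
  rintro ⟨hx, hxr⟩
  obtain ⟨t, rfl⟩ := Submodule.mem_span_singleton.1 hxr
  exact ⟨hx, by rw [dotQ_smul_right, hr.2, mul_zero]⟩

theorem IsExtremeRay.exists_mem_ne_zero_of_posSpan {S R : Set (Fin n → ℚ)}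
    (hR : IsExtremeRay (posSpan S) R) : ∃ b ∈ S, b ∈ R ∧ b ≠ 0 := by
  obtain ⟨c, hc, rfl, hrank⟩ := hR
  obtain ⟨x, ⟨⟨k, l, b, hl, hb, rfl⟩, hx⟩, hx0⟩ := exists_mem_ne_zero_of_finrank_span_eq_one hrank
  have hbS : ∀ i, b i ∈ posSpan S := fun i => posSpan_eq_hull S ▸ PointedCone.subset_hull (hb i)
  obtain ⟨i, -, hi⟩ := Finset.exists_ne_zero_of_sum_ne_zero hx0
  have hterm := (Finset.sum_eq_zero_iff_of_nonneg fun i _ => mul_nonneg (hl i) (hc _ (hbS i))).1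
    (by simpa [dotQ_eq_dotProductEquiv, map_sum] using hx) i (Finset.mem_univ i)
  exact ⟨b i, hb i, ⟨hbS i, (mul_eq_zero.1 hterm).resolve_left (left_ne_zero_of_smul hi)⟩,
    right_ne_zero_of_smul hi⟩

theorem IsPolyCone.finite_extremeRays {σ : Set (Fin n → ℚ)} (h : IsPolyCone σ) :
    {R | IsExtremeRay σ R}.Finite := by
  obtain ⟨B, rfl⟩ := h
  refine (B.finite_toSet.image fun b => posSpan ↑B ∩ (ℚ ∙ b)).subset fun R hR => ?_
  obtain ⟨b, hbB, hbR, hb0⟩ := IsExtremeRay.exists_mem_ne_zero_of_posSpan hR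
  exact ⟨b, hbB, (hR.eq_inter_span hbR hb0).symm⟩

end ExtremeRays

section DirectSum

variable {n : ℕ} {σ₁ σ₂ : Set (Fin n → ℚ)} {a : Fin n → ℚ}

theorem IsExtremeRay.onExtremeRay_of_mem_span (ha : a ∈ σ₁)
    (hspan : Submodule.span ℚ σ₁ ⊓ Submodule.span ℚ σ₂ = ℚ ∙ a) {R : Set (Fin n → ℚ)}
    (hR : IsExtremeRay σ₁ R) {r : Fin n → ℚ} (hr : r ∈ R) (hr0 : r ≠ 0)
    (hr₂ : r ∈ Submodule.span ℚ σ₂) : OnExtremeRay σ₁ a := by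
  obtain ⟨c, hc, rfl, hrank⟩ := hR
  refine ⟨_, ⟨c, hc, rfl, hrank⟩, ha, ?_⟩
  obtain ⟨s, rfl⟩ := Submodule.mem_span_singleton.1
    (hspan ▸ Submodule.mem_inf.2 ⟨Submodule.subset_span hr.1, hr₂⟩)
  have hr := hr.2
  rw [dotQ_smul_right] at hr
  exact (mul_eq_zero.1 hr).resolve_left (left_ne_zero_of_smul hr0)

theorem disjoint_extremeRays (ha : a ∈ σ₁)
    (hspan : Submodule.span ℚ σ₁ ⊓ Submodule.span ℚ σ₂ = ℚ ∙ a) (hint : ¬ OnExtremeRay σ₁ a) :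
    Disjoint {R | IsExtremeRay σ₁ R} {R | IsExtremeRay σ₂ R} := by
  refine Set.disjoint_left.2 fun R h₁ h₂ => ?_
  obtain ⟨c, -, rfl, hrank⟩ := h₂
  obtain ⟨r, hr, hr0⟩ := exists_mem_ne_zero_of_finrank_span_eq_one hrank
  exact hint (h₁.onExtremeRay_of_mem_span ha hspan hr hr0 (Submodule.subset_span hr.1))

theorem IsExtremeRay.left_or_right_of_add (h0₁ : (0 : Fin n → ℚ) ∈ σ₁)
    (h0₂ : (0 : Fin n → ℚ) ∈ σ₂) (ha : a ∈ σ₁)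
    (hspan : Submodule.span ℚ σ₁ ⊓ Submodule.span ℚ σ₂ = ℚ ∙ a) (hint : ¬ OnExtremeRay σ₁ a)
    {R : Set (Fin n → ℚ)} (hR : IsExtremeRay (σ₁ + σ₂) R) :
    IsExtremeRay σ₁ R ∨ IsExtremeRay σ₂ R := by
  obtain ⟨c, hc, rfl, hrank⟩ := hR
  have hc₁ : ∀ x ∈ σ₁, 0 ≤ dotQ c x := fun x hx => hc x (by simpa using Set.add_mem_add hx h0₂)
  have hc₂ : ∀ x ∈ σ₂, 0 ≤ dotQ c x := fun x hx => hc x (by simpa using Set.add_mem_add h0₁ hx)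
  change Module.finrank ℚ (Submodule.span ℚ (face _ c)) = 1 at hrank
  change IsExtremeRay σ₁ (face _ c) ∨ IsExtremeRay σ₂ (face _ c)
  rw [face_add hc₁ hc₂] at hrank ⊢
  by_cases hF₁ : ∀ x ∈ face σ₁ c, x = 0
  · rw [face_eq_zero h0₁ hF₁, zero_add] at hrank ⊢
    exact Or.inr ⟨c, hc₂, rfl, hrank⟩
  push Not at hF₁
  obtain ⟨x₁, hx₁, hx₁0⟩ := hF₁
  have hsub₁ : face σ₁ c ⊆ face σ₁ c + face σ₂ c :=
    Set.subset_add_left _ ⟨h0₂, dotQ_zero_right c⟩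
  have hray : IsExtremeRay σ₁ (face σ₁ c) :=
    ⟨c, hc₁, rfl, finrank_span_eq_one_of_subset hsub₁ hrank hx₁ hx₁0⟩
  -- two nonzero points of the ray, one from each summand, would put `x₁` in `span σ₂`
  have hF₂ : face σ₂ c = 0 := face_eq_zero h0₂ fun x₂ hx₂ => by
    by_contra hx₂0
    have hx₂R : x₂ ∈ face σ₁ c + face σ₂ c := Set.subset_add_right _
      (show 0 ∈ face σ₁ c from ⟨h0₁, dotQ_zero_right c⟩) hx₂
    have hRx₂ := eq_span_singleton_of_mem_of_finrank_eq_one hrank (Submodule.subset_span hx₂R) hx₂0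
    have hx₁x₂ : x₁ ∈ ℚ ∙ x₂ := hRx₂ ▸ Submodule.subset_span (hsub₁ hx₁)
    exact hint (hray.onExtremeRay_of_mem_span ha hspan hx₁ hx₁0
      (Submodule.span_mono (Set.singleton_subset_iff.2 hx₂.1) hx₁x₂))
  rw [hF₂, add_zero]
  exact Or.inl hray

theorem exists_dotQ_eqOn_left_pos_right (ha₂ : a ∈ σ₂)
    (hspan : Submodule.span ℚ σ₁ ⊓ Submodule.span ℚ σ₂ = ℚ ∙ a) {c₁ w : Fin n → ℚ}
    (hc₁a : 0 < dotQ c₁ a) (hw : ∀ x ∈ σ₂, x ≠ 0 → 0 < dotQ w x) :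
    ∃ c, (∀ x ∈ σ₁, dotQ c x = dotQ c₁ x) ∧ ∀ x ∈ σ₂, x ≠ 0 → 0 < dotQ c x := by
  have hwa : 0 < dotQ w a := hw a ha₂ (by rintro rfl; simp [dotQ_zero_right] at hc₁a)
  -- on `span σ₂` take the multiple of `w` that agrees with `c₁` at `a`
  set γ := dotQ c₁ a / dotQ w a
  obtain ⟨c, hc₁, hc₂⟩ := exists_dotQ_eqOn (c₁ := c₁) (c₂ := γ • w) fun x hx => by
    rw [hspan] at hx
    obtain ⟨s, rfl⟩ := Submodule.mem_span_singleton.1 hx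
    have := hwa.ne'
    simp only [dotQ_smul_right, dotQ_smul_left, γ]
    field_simp
  refine ⟨c, fun x hx => hc₁ x (Submodule.subset_span hx), fun x hx hx0 => ?_⟩
  rw [hc₂ x (Submodule.subset_span hx), dotQ_smul_left]
  exact mul_pos (div_pos hc₁a hwa) (hw x hx hx0)

theorem isExtremeRay_add_of_left (h0₂ : (0 : Fin n → ℚ) ∈ σ₂) (ha₁ : a ∈ σ₁) (ha₂ : a ∈ σ₂)
    (hspan : Submodule.span ℚ σ₁ ⊓ Submodule.span ℚ σ₂ = ℚ ∙ a) (hint : ¬ OnExtremeRay σ₁ a)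
    {w : Fin n → ℚ} (hw : ∀ x ∈ σ₂, x ≠ 0 → 0 < dotQ w x) {R : Set (Fin n → ℚ)}
    (hR : IsExtremeRay σ₁ R) : IsExtremeRay (σ₁ + σ₂) R := by
  obtain ⟨c₁, hc₁, rfl, hrank⟩ := hR
  have hc₁a : 0 < dotQ c₁ a :=
    (hc₁ a ha₁).lt_of_ne fun h => hint ⟨_, ⟨c₁, hc₁, rfl, hrank⟩, ha₁, h.symm⟩
  obtain ⟨c, hcc₁, hc₂⟩ := exists_dotQ_eqOn_left_pos_right ha₂ hspan hc₁a hw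
  have hc₁' : ∀ x ∈ σ₁, 0 ≤ dotQ c x := fun x hx => hcc₁ x hx ▸ hc₁ x hx
  have hc₂' : ∀ x ∈ σ₂, 0 ≤ dotQ c x := fun x hx => by
    rcases eq_or_ne x 0 with rfl | hx0
    · rw [dotQ_zero_right]
    · exact (hc₂ x hx hx0).le
  have hF₁ : face σ₁ c = face σ₁ c₁ := Set.ext fun x => and_congr_right fun hx => by rw [hcc₁ x hx]
  have hF₂ : face σ₂ c = 0 := face_eq_zero h0₂ fun x hx => by
    by_contra hx0
    exact (hc₂ x hx.1 hx0).ne' hx.2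
  refine ⟨c, ?_, ?_, hrank⟩
  · rintro _ ⟨x₁, hx₁, x₂, hx₂, rfl⟩
    rw [dotQ_add_right]
    exact add_nonneg (hc₁' x₁ hx₁) (hc₂' x₂ hx₂)
  · change face σ₁ c₁ = face _ c
    rw [face_add hc₁' hc₂', hF₁, hF₂, add_zero]

end DirectSum

/-- For a direct sum of internal type, the extreme rays of the sum are exactly
the extreme rays of the summands, so their number is `k₁ + k₂`. -/
theorem directSum_internal_rays {n : ℕ} (σ₁ σ₂ σ : Set (Fin n → ℚ))
    (h₁ : IsPolyCone σ₁) (h₂ : IsPolyCone σ₂)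
    (hs₁ : StronglyConvex σ₁) (hs₂ : StronglyConvex σ₂)
    (a : Fin n → ℚ) (hds : IsDirectSumAlong σ₁ σ₂ σ a)
    (hint₁ : ¬ OnExtremeRay σ₁ a) (hint₂ : ¬ OnExtremeRay σ₂ a)
    (k₁ k₂ : ℕ)
    (hk₁ : {R | IsExtremeRay σ₁ R}.ncard = k₁)
    (hk₂ : {R | IsExtremeRay σ₂ R}.ncard = k₂) :
    {R | IsExtremeRay σ R} = {R | IsExtremeRay σ₁ R} ∪ {R | IsExtremeRay σ₂ R} ∧
    {R | IsExtremeRay σ R}.ncard = k₁ + k₂ := by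
  obtain ⟨⟨ha₁, ha₂⟩, hspan, rfl⟩ := hds
  have hspan' : Submodule.span ℚ σ₂ ⊓ Submodule.span ℚ σ₁ = ℚ ∙ a := by
    rwa [inf_comm]
  obtain ⟨w₁, hw₁⟩ := h₁.exists_dotQ_pos hs₁
  obtain ⟨w₂, hw₂⟩ := h₂.exists_dotQ_pos hs₂
  rw [h₁.posSpan_union h₂]
  have hrays : {R | IsExtremeRay (σ₁ + σ₂) R} =
      {R | IsExtremeRay σ₁ R} ∪ {R | IsExtremeRay σ₂ R} := by
    ext R
    refine ⟨fun hR => hR.left_or_right_of_add h₁.zero_mem h₂.zero_mem ha₁ hspan hint₁, ?_⟩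
    rintro (hR | hR)
    · exact isExtremeRay_add_of_left h₂.zero_mem ha₁ ha₂ hspan hint₁ hw₂ hR
    · rw [add_comm]
      exact isExtremeRay_add_of_left h₁.zero_mem ha₂ ha₁ hspan' hint₂ hw₁ hR
  refine ⟨hrays, ?_⟩
  rw [hrays, Set.ncard_union_eq (disjoint_extremeRays ha₁ hspan hint₁) h₁.finite_extremeRays
    h₂.finite_extremeRays, hk₁, hk₂]
end

section
/- Let A_1, A_2 ⊆ Z^n with Z·A_1 ∩ Z·A_2 = Z·a, where a = (a_1,...,a_n), g = gcd(a_1,...,a_n), and let τ be a positive integer coprime to g. Then Z·(τA_1) ∩ Z·A_2 = Z·(τa). -/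
open scoped BigOperators

/-- Coordinatewise cast of an integer vector to a rational vector. -/
def ratify {n : ℕ} (v : Fin n → ℤ) : Fin n → ℚ := fun j => (v j : ℚ)

/-- The subsemigroup (submonoid) of ℤ^n generated by a set. -/
def natSpan {n : ℕ} (A : Set (Fin n → ℤ)) : AddSubmonoid (Fin n → ℤ) :=
  AddSubmonoid.closure A

/-- The subgroup of ℤ^n generated by a set. -/
def intSpan {n : ℕ} (A : Set (Fin n → ℤ)) : AddSubgroup (Fin n → ℤ) :=
  AddSubgroup.closure A

/-- The semigroup generated by `A` has no invertible elements (is affine). -/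
def IsAffineSemigroup {n : ℕ} (A : Set (Fin n → ℤ)) : Prop :=
  ∀ x ∈ natSpan A, -x ∈ natSpan A → x = 0

/-- `ℕ(A₁ ∪ A₂)` is the gluing of `ℕA₁` and `ℕA₂`. -/
def IsGluing {n : ℕ} (A₁ A₂ : Set (Fin n → ℤ)) : Prop :=
  ∃ a : Fin n → ℤ, a ≠ 0 ∧ a ∈ natSpan A₁ ⊓ natSpan A₂ ∧
    intSpan {a} = intSpan A₁ ⊓ intSpan A₂

/-- `ℕ(A₁ ∪ A₂)` is the s-gluing of `ℕA₁` and `ℕA₂`. -/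
def IsSGluing {n : ℕ} (A₁ A₂ : Set (Fin n → ℤ)) : Prop :=
  ∃ a : Fin n → ℤ, intSpan {a} = intSpan A₁ ⊓ intSpan A₂ ∧
    ∃ t : ℕ, 0 < t ∧ (t : ℤ) • a ∈ natSpan A₁ ⊓ natSpan A₂

/-- The gcd of the coordinates of an integer vector. -/
def coordGcd {n : ℕ} (a : Fin n → ℤ) : ℕ :=
  Finset.univ.gcd fun i => (a i).natAbs

/-- If `ℤA₁ ∩ ℤA₂ = ℤa` and `τ` is a positive integer coprime to the gcd of
the coordinates of `a`, then `ℤ(τA₁) ∩ ℤA₂ = ℤ(τa)`. -/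
theorem intSpan_smul_inter {n : ℕ} (A₁ A₂ : Set (Fin n → ℤ))
    (h₁ : A₁.Finite) (h₂ : A₂.Finite) (a : Fin n → ℤ)
    (hinter : intSpan A₁ ⊓ intSpan A₂ = intSpan {a})
    (τ : ℕ) (hτ : 0 < τ) (hcop : Nat.Coprime τ (coordGcd a)) :
    intSpan ((fun b => (τ : ℤ) • b) '' A₁) ⊓ intSpan A₂
      = intSpan {(τ : ℤ) • a} := by
  classical
  set f : (Fin n → ℤ) →+ (Fin n → ℤ) := DistribMulAction.toAddMonoidHom _ ((τ : ℤ)) with hf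
  have hmap : intSpan ((fun b => (τ : ℤ) • b) '' A₁) = (intSpan A₁).map f := by
    rw [intSpan, intSpan, AddMonoidHom.map_closure]
    rfl
  have ha : a ∈ intSpan A₁ ⊓ intSpan A₂ := by
    rw [hinter]
    exact AddSubgroup.subset_closure rfl
  apply le_antisymm
  · rintro x ⟨hx1, hx2⟩
    have hx1' : x ∈ AddSubgroup.map f (intSpan A₁) := hmap ▸ hx1
    obtain ⟨y, hy, hyx⟩ := AddSubgroup.mem_map.mp hx1'
    have hxA1 : x ∈ intSpan A₁ := by
      rw [← hyx]
      exact AddSubgroup.zsmul_mem _ hy _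
    have hxa : x ∈ intSpan ({a} : Set (Fin n → ℤ)) := by
      rw [← hinter]; exact ⟨hxA1, hx2⟩
    obtain ⟨k, hk⟩ := AddSubgroup.mem_closure_singleton.mp hxa
    -- for each coordinate, τ ∣ k * a i
    have hdvd : ∀ i, (τ : ℤ) ∣ k * a i := by
      intro i
      refine ⟨y i, ?_⟩
      have := congrFun hk i
      have h2 := congrFun hyx i
      simp only [Pi.smul_apply, smul_eq_mul] at this h2
      rw [this, ← h2]
      rfl
    have hdvd' : τ ∣ k.natAbs * coordGcd a := by
      have : τ ∣ Finset.univ.gcd fun i => k.natAbs * (a i).natAbs := by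
        refine Finset.dvd_gcd fun i _ => ?_
        have := Int.natAbs_dvd_natAbs.mpr (hdvd i)
        rwa [Int.natAbs_mul, Int.natAbs_natCast] at this
      rwa [Finset.gcd_mul_left, normalize_eq] at this
    have hτk : (τ : ℤ) ∣ k := by
      have := Nat.Coprime.dvd_of_dvd_mul_right hcop hdvd'
      exact Int.natCast_dvd_natCast.mpr this |>.trans (Int.natAbs_dvd.mpr dvd_rfl)
    obtain ⟨m, hm⟩ := hτk
    show x ∈ AddSubgroup.closure {(τ : ℤ) • a}
    rw [AddSubgroup.mem_closure_singleton]
    refine ⟨m, ?_⟩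
    rw [← hk, hm, smul_smul, mul_comm]
  · rw [intSpan, AddSubgroup.closure_le]
    rintro x rfl
    constructor
    · rw [hmap]
      exact AddSubgroup.mem_map.mpr ⟨a, ha.1, rfl⟩
    · exact AddSubgroup.zsmul_mem _ ha.2 _
end
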